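/- arXiv:0910.2393 — 2 statements merged into one kernel-verified Lean document; each statement's English description precedes it below -/
import Mathlib

section
/- Let (f_*, f^*) be a Chu morphism of biextensional quantum Chu spaces from H to K. Then for every nonzero ψ ∈ H and every closed subspace S of K: ψ ∈ f^*(S) if and only if φ ∈ S, where φ is any representative of the ray f_*([ψ]). -/
/-- The quantum evaluation `e(ψ, S) = ‖P_S ψ‖² / ‖ψ‖²` for a closed subspace `S`
of a complex Hilbert space. -/
noncomputable def qeval {H : Type*} [NormedAddCommGroup H] [InnerProductSpace ℂ H]
    [CompleteSpace H] (ψ : H) (S : Submodule ℂ H) (hS : IsClosed (S : Set H)) : ℝ :=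
  letI : CompleteSpace S := hS.completeSpace_coe
  ‖(S.orthogonalProjectionOnto ψ : H)‖ ^ 2 / ‖ψ‖ ^ 2

theorem qeval_eq_one_iff {H : Type*} [NormedAddCommGroup H] [InnerProductSpace ℂ H]
    [CompleteSpace H] {ψ : H} (hψ : ψ ≠ 0) {S : Submodule ℂ H} (hS : IsClosed (S : Set H)) :
    qeval ψ S hS = 1 ↔ ψ ∈ S := by
  have : CompleteSpace S := hS.completeSpace_coe
  rw [qeval, div_eq_one_iff_eq (pow_ne_zero 2 (norm_ne_zero_iff.mpr hψ)),
    S.mem_iff_norm_starProjection, sq_eq_sq₀ (norm_nonneg _) (norm_nonneg _)]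
  rfl

/-- Let `(f₁, f₂)` be a Chu morphism of biextensional quantum Chu spaces from `H` to `K`:
`f₁ : ℙ(H) → ℙ(K)`, `f₂` maps closed subspaces of `K` to closed subspaces of `H`, and
`e_H(ψ, f₂ S) = e_K(φ, S)` whenever `φ` represents `f₁ [ψ]`.  Then for every nonzero `ψ ∈ H`
and closed subspace `S` of `K`: `ψ ∈ f₂ S` iff `φ ∈ S`, where `φ` is any representative of
the ray `f₁ [ψ]`. -/
theorem chu_mem_adjointness
    {H K : Type*} [NormedAddCommGroup H] [InnerProductSpace ℂ H] [CompleteSpace H]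
    [NormedAddCommGroup K] [InnerProductSpace ℂ K] [CompleteSpace K]
    (f₁ : Projectivization ℂ H → Projectivization ℂ K)
    (f₂ : {S : Submodule ℂ K // IsClosed (S : Set K)} →
          {S : Submodule ℂ H // IsClosed (S : Set H)})
    (hchu : ∀ (ψ : H) (hψ : ψ ≠ 0) (S : {S : Submodule ℂ K // IsClosed (S : Set K)})
      (φ : K) (hφ : φ ≠ 0), Projectivization.mk ℂ φ hφ = f₁ (Projectivization.mk ℂ ψ hψ) →
      qeval ψ (f₂ S).1 (f₂ S).2 = qeval φ S.1 S.2) :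
    ∀ (ψ : H) (hψ : ψ ≠ 0) (S : {S : Submodule ℂ K // IsClosed (S : Set K)})
      (φ : K) (hφ : φ ≠ 0), Projectivization.mk ℂ φ hφ = f₁ (Projectivization.mk ℂ ψ hψ) →
      (ψ ∈ (f₂ S).1 ↔ φ ∈ S.1) := by
  intro ψ hψ S φ hφ hmk
  rw [← qeval_eq_one_iff hψ (f₂ S).2, ← qeval_eq_one_iff hφ S.2, hchu ψ hψ S φ hφ hmk]
end

section
/- Let (f_*, f^*) be a Chu morphism of biextensional quantum Chu spaces from H to K. Then f_* is injective if and only if for every nonzero ψ ∈ H, f^*(L) = ℂψ, where L is the one-dimensional closed subspace of K given by the ray f_*([ψ]) and ℂψ is the one-dimensional subspace spanned by ψ. -/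
/-- The one-dimensional subspace determined by a point of projective space is closed. -/
theorem proj_submodule_isClosed {K : Type*} [NormedAddCommGroup K] [InnerProductSpace ℂ K]
    (v : Projectivization ℂ K) : IsClosed ((v.submodule : Submodule ℂ K) : Set K) := by
  rw [Projectivization.submodule_eq]
  exact Submodule.closed_of_finiteDimensional _

/-!
A vector `ψ ≠ 0` has evaluation `1` on a closed subspace exactly when it lies in it. Applied to
the line `L_v` of a ray `v`, the Chu condition therefore says that the nonzero vectors of
`f^*(L_v)` are exactly those `ψ` with `f_*[ψ] = v`: `f^*(L_{f_*[ψ]})` is the fibre of `f_*`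
through `[ψ]`, and it is the line `ℂψ` for every `ψ` iff every fibre of `f_*` is a single ray.
-/

theorem Projectivization.mem_submodule_iff {K V : Type*} [DivisionRing K] [AddCommGroup V]
    [Module K V] (v : Projectivization K V) {w : V} (hw : w ≠ 0) :
    w ∈ v.submodule ↔ mk K w hw = v := by
  induction v using Projectivization.ind with | h u hu => ?_
  rw [submodule_mk, Submodule.mem_span_singleton, mk_eq_mk_iff']

theorem Submodule.eq_iff_forall_ne_zero_mem_iff {R M : Type*} [Semiring R] [AddCommMonoid M]
    [Module R M] {A B : Submodule R M} : A = B ↔ ∀ x ≠ 0, (x ∈ A ↔ x ∈ B) := by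
  refine ⟨fun h _ _ => h ▸ Iff.rfl, fun h => SetLike.ext fun x => ?_⟩
  rcases eq_or_ne x 0 with rfl | hx
  · simp only [zero_mem]
  · exact h x hx

section ChuMorphism

variable {H K : Type*} [NormedAddCommGroup H] [InnerProductSpace ℂ H] [CompleteSpace H]
  [NormedAddCommGroup K] [InnerProductSpace ℂ K] [CompleteSpace K]

open Projectivization

def IsChuMorphism (f₁ : Projectivization ℂ H → Projectivization ℂ K)
    (f₂ : {S : Submodule ℂ K // IsClosed (S : Set K)} →
      {S : Submodule ℂ H // IsClosed (S : Set H)}) : Prop :=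
  ∀ (ψ : H) (hψ : ψ ≠ 0) (S : {S : Submodule ℂ K // IsClosed (S : Set K)})
    (φ : K) (hφ : φ ≠ 0), mk ℂ φ hφ = f₁ (mk ℂ ψ hψ) →
    qeval ψ (f₂ S).1 (f₂ S).2 = qeval φ S.1 S.2

variable {f₁ : Projectivization ℂ H → Projectivization ℂ K}
  {f₂ : {S : Submodule ℂ K // IsClosed (S : Set K)} →
    {S : Submodule ℂ H // IsClosed (S : Set H)}}

theorem IsChuMorphism.mem_pullback_submodule_iff (hf : IsChuMorphism f₁ f₂) {ψ : H}
    (hψ : ψ ≠ 0) (v : Projectivization ℂ K) :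
    ψ ∈ (f₂ ⟨v.submodule, proj_submodule_isClosed v⟩).1 ↔ f₁ (mk ℂ ψ hψ) = v := by
  set w := f₁ (mk ℂ ψ hψ)
  rw [← qeval_eq_one_iff hψ (f₂ _).2, hf ψ hψ _ w.rep w.rep_nonzero w.mk_rep,
    qeval_eq_one_iff w.rep_nonzero, v.mem_submodule_iff w.rep_nonzero, w.mk_rep]

theorem IsChuMorphism.pullback_submodule_eq_span_iff (hf : IsChuMorphism f₁ f₂) {ψ : H}
    (hψ : ψ ≠ 0) :
    (f₂ ⟨(f₁ (mk ℂ ψ hψ)).submodule, proj_submodule_isClosed _⟩).1 = Submodule.span ℂ {ψ} ↔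
      ∀ (χ : H) (hχ : χ ≠ 0), f₁ (mk ℂ χ hχ) = f₁ (mk ℂ ψ hψ) ↔ mk ℂ χ hχ = mk ℂ ψ hψ := by
  rw [Submodule.eq_iff_forall_ne_zero_mem_iff, ← submodule_mk ψ hψ]
  refine forall₂_congr fun χ hχ => ?_
  rw [hf.mem_pullback_submodule_iff hχ, mem_submodule_iff _ hχ]

end ChuMorphism

/-- Let `(f₁, f₂)` be a Chu morphism of biextensional quantum Chu spaces from `H` to `K`.
Then `f₁` is injective iff for every nonzero `ψ ∈ H`, `f₂ L = ℂψ`, where `L` is the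
one-dimensional closed subspace of `K` given by the ray `f₁ [ψ]` and `ℂψ = span ℂ {ψ}`. -/
theorem chu_injective_iff_retract
    {H K : Type*} [NormedAddCommGroup H] [InnerProductSpace ℂ H] [CompleteSpace H]
    [NormedAddCommGroup K] [InnerProductSpace ℂ K] [CompleteSpace K]
    (f₁ : Projectivization ℂ H → Projectivization ℂ K)
    (f₂ : {S : Submodule ℂ K // IsClosed (S : Set K)} →
          {S : Submodule ℂ H // IsClosed (S : Set H)})
    (hchu : ∀ (ψ : H) (hψ : ψ ≠ 0) (S : {S : Submodule ℂ K // IsClosed (S : Set K)})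
      (φ : K) (hφ : φ ≠ 0), Projectivization.mk ℂ φ hφ = f₁ (Projectivization.mk ℂ ψ hψ) →
      qeval ψ (f₂ S).1 (f₂ S).2 = qeval φ S.1 S.2) :
    Function.Injective f₁ ↔
      ∀ (ψ : H) (hψ : ψ ≠ 0),
        (f₂ ⟨(f₁ (Projectivization.mk ℂ ψ hψ)).submodule,
              proj_submodule_isClosed _⟩).1 = Submodule.span ℂ {ψ} := by
  have hf : IsChuMorphism f₁ f₂ := hchu
  simp only [hf.pullback_submodule_eq_span_iff]
  refine ⟨fun hinj ψ hψ χ hχ => hinj.eq_iff, fun h x y hxy => ?_⟩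
  induction x using Projectivization.ind with | h ψ hψ => ?_
  induction y using Projectivization.ind with | h χ hχ => ?_
  exact (h χ hχ ψ hψ).mp hxy
end
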